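/- Let ι be a finite nonempty set of players, for each player i let A i be a set of strategies, and let u i : (Π i, A i) → ℝ be the utility function of player i. Suppose Φ : (Π i, A i) → ℝ is an ordinal potential for the game, i.e., for every player i, every strategy profile a, and every strategy b ∈ A i, one has u i (Function.update a i b) - u i a > 0 if and only if Φ (Function.update a i b) - Φ a > 0. If a* is a strategy profile that maximizes Φ over all strategy profiles, then a* is a pure Nash equilibrium: for every player i and every b ∈ A i, u i (Function.update a* i b) ≤ u i a*. -/
import Mathlib

/-- In an ordinal potential game, any maximizer of the potential function
is a pure Nash equilibrium. -/
theorem ordinal_potential_maximizer_is_nash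
    {ι : Type*} [Fintype ι] [DecidableEq ι] [Nonempty ι] {A : ι → Type*}
    (u : ∀ i : ι, (∀ j, A j) → ℝ) (Φ : (∀ j, A j) → ℝ)
    (hpot : ∀ (i : ι) (a : ∀ j, A j) (b : A i),
      u i (Function.update a i b) - u i a > 0 ↔ Φ (Function.update a i b) - Φ a > 0)
    (astar : ∀ j, A j) (hmax : ∀ a : ∀ j, A j, Φ a ≤ Φ astar) :
    ∀ (i : ι) (b : A i), u i (Function.update astar i b) ≤ u i astar := by
  intro i b
  by_contra h
  push_neg at h
  have := (hpot i astar b).mp (by linarith)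
  have := hmax (Function.update astar i b)
  linarith
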